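/- Let X and Y be compact Hausdorff spaces and let C be a lattice base for the closed sets of Y. Then there exists a continuous surjection from X onto Y if and only if there exists a map φ from C to the closed subsets of X such that: (1) φ(∅) = ∅, and φ(F) ≠ ∅ whenever F ≠ ∅; (2) whenever F ∪ G = Y one has φ(F) ∪ φ(G) = X; and (3) whenever F₁ ∩ ⋯ ∩ Fₙ = ∅ for finitely many F₁, …, Fₙ ∈ C, one has φ(F₁) ∩ ⋯ ∩ φ(Fₙ) = ∅. -/
import Mathlib


/-- A lattice base for the closed sets of `Y`. -/
def IsLatticeBaseForCloseds {Y : Type*} [TopologicalSpace Y] (C : Set (Set Y)) : Prop :=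
  (∀ b ∈ C, IsClosed b) ∧ ∅ ∈ C ∧ Set.univ ∈ C ∧
  (∀ a ∈ C, ∀ b ∈ C, a ∪ b ∈ C) ∧ (∀ a ∈ C, ∀ b ∈ C, a ∩ b ∈ C) ∧
  ∀ F : Set Y, IsClosed F → ∃ S ⊆ C, F = ⋂₀ S

/-- Finite intersections of members of a lattice base belong to the base. -/
lemma latticeBase_finset_iInter {Y : Type*} [TopologicalSpace Y] {C : Set (Set Y)}
    (hC : IsLatticeBaseForCloseds C) {ι : Type*} [DecidableEq ι]
    (t : Finset ι) (g : ι → Set Y) (hg : ∀ i ∈ t, g i ∈ C) :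
    ⋂ i ∈ t, g i ∈ C := by
  classical
  induction t using Finset.induction with
  | empty => simpa using hC.2.2.1
  | @insert a s ha ih =>
      rw [Finset.set_biInter_insert]
      exact hC.2.2.2.2.1 _ (hg a (Finset.mem_insert_self a s)) _
        (ih fun i hi => hg i (Finset.mem_insert_of_mem hi))

/-- In a compact space, a closed set contained in an open set can be squeezed
by a member of a lattice base for the closed sets. -/
lemma latticeBase_squeeze {Y : Type*} [TopologicalSpace Y] [CompactSpace Y]
    {C : Set (Set Y)} (hC : IsLatticeBaseForCloseds C) {K U : Set Y}
    (hK : IsClosed K) (hU : IsOpen U) (hKU : K ⊆ U) :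
    ∃ G ∈ C, K ⊆ G ∧ G ⊆ U := by
  classical
  obtain ⟨S, hSC, hKS⟩ := hC.2.2.2.2.2 K hK
  have hcomp : IsCompact Uᶜ := hU.isClosed_compl.isCompact
  have hcover : Uᶜ ⊆ ⋃ i : S, ((i : Set Y))ᶜ := by
    intro z hz
    have hzK : z ∉ K := fun h => hz (hKU h)
    rw [hKS, Set.mem_sInter] at hzK
    push_neg at hzK
    obtain ⟨F, hFS, hzF⟩ := hzK
    exact Set.mem_iUnion.2 ⟨⟨F, hFS⟩, hzF⟩
  obtain ⟨t, ht⟩ := hcomp.elim_finite_subcover (fun i : S => ((i : Set Y))ᶜ)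
    (fun i => (hC.1 _ (hSC i.2)).isOpen_compl) hcover
  refine ⟨⋂ i ∈ t, (i : Set Y),
    latticeBase_finset_iInter hC t _ (fun i _ => hSC i.2), ?_, ?_⟩
  · intro z hz
    refine Set.mem_iInter₂.2 fun i _ => ?_
    have : z ∈ ⋂₀ S := hKS ▸ hz
    exact this _ i.2
  · intro z hz
    by_contra hzU
    obtain ⟨i, hit, hzi⟩ := Set.mem_iUnion₂.1 (ht hzU)
    exact hzi (Set.mem_iInter₂.1 hz i hit)

/-- `Y` is a continuous image of `X` iff there is a map `φ` from a lattice base for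
the closed sets of `Y` to the closed sets of `X` satisfying the three conditions of
the theorem of Dow and Hart. -/
theorem continuous_image_iff_exists_map (X Y : Type*) [TopologicalSpace X]
    [TopologicalSpace Y] [CompactSpace X] [CompactSpace Y] [T2Space X] [T2Space Y]
    (C : Set (Set Y)) (hC : IsLatticeBaseForCloseds C) :
    (∃ f : X → Y, Continuous f ∧ Function.Surjective f) ↔
      ∃ φ : Set Y → Set X,
        (∀ F ∈ C, IsClosed (φ F)) ∧
        (φ ∅ = ∅) ∧
        (∀ F ∈ C, F ≠ ∅ → φ F ≠ ∅) ∧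
        (∀ F ∈ C, ∀ G ∈ C, F ∪ G = Set.univ → φ F ∪ φ G = Set.univ) ∧
        (∀ S : Finset (Set Y), ↑S ⊆ C → S.Nonempty → ⋂₀ (S : Set (Set Y)) = ∅ →
          ⋂₀ (φ '' (S : Set (Set Y))) = ∅) := by
  classical
  constructor
  · rintro ⟨f, hf, hfs⟩
    refine ⟨fun F => f ⁻¹' F, fun F hF => (hC.1 F hF).preimage hf, by simp,
      fun F _ hF => ?_, fun F _ G _ hFG => ?_, fun S _ _ hS => ?_⟩
    · rw [← Set.nonempty_iff_ne_empty] at hF ⊢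
      obtain ⟨y, hy⟩ := hF
      obtain ⟨x, rfl⟩ := hfs y
      exact ⟨x, hy⟩
    · rw [← Set.preimage_union, hFG, Set.preimage_univ]
    · rw [Set.sInter_image]
      have : ⋂ F ∈ (S : Set (Set Y)), f ⁻¹' F = f ⁻¹' (⋂₀ (S : Set (Set Y))) := by
        rw [Set.preimage_sInter]
      rw [this, hS, Set.preimage_empty]
  · rintro ⟨φ, h1, h2, h3, h4, h5⟩
    have hφuniv : φ Set.univ = Set.univ := by
      have := h4 Set.univ hC.2.2.1 Set.univ hC.2.2.1 (by simp)
      simpa using this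
    -- the defining property of the map
    set P : X → Y → Prop := fun x y => ∀ F ∈ C, x ∈ φ F → y ∈ F with hP
    -- existence
    have hex : ∀ x : X, ∃ y : Y, P x y := by
      intro x
      by_contra hcon
      push_neg at hcon
      -- consider the family of base sets whose φ-image contains x
      set ι := {F : Set Y // F ∈ C ∧ x ∈ φ F} with hι
      have hempty : (Set.univ : Set Y) ∩ ⋂ i : ι, (i : Set Y) = ∅ := by
        rw [Set.univ_inter]
        rw [Set.eq_empty_iff_forall_notMem]
        intro y hy
        have hcy : ¬ ∀ F ∈ C, x ∈ φ F → y ∈ F := by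
          have := hcon y; rw [hP] at this; exact this
        push_neg at hcy
        obtain ⟨F, hFC, hxF, hyF⟩ := hcy
        exact hyF (Set.mem_iInter.1 hy ⟨F, hFC, hxF⟩)
      obtain ⟨t, ht⟩ := IsCompact.elim_finite_subfamily_closed isCompact_univ
        (fun i : ι => (i : Set Y)) (fun i => hC.1 _ i.2.1) hempty
      rw [Set.univ_inter] at ht
      rcases t.eq_empty_or_nonempty with rfl | htne
      · simp only [Finset.notMem_empty, Set.iInter_of_empty, Set.iInter_univ] at ht
        have huniv : (Set.univ : Set Y) = ∅ := ht
        have : φ (∅ : Set Y) = Set.univ := by rw [← huniv, hφuniv]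
        rw [h2] at this
        exact absurd (Set.mem_univ x) (by rw [← this]; simp)
      · set s : Finset (Set Y) := t.image Subtype.val with hs
        have hsC : (s : Set (Set Y)) ⊆ C := by
          intro F hF
          simp only [hs, Finset.coe_image, Set.mem_image] at hF
          obtain ⟨i, _, rfl⟩ := hF
          exact i.2.1
        have hsne : s.Nonempty := htne.image _
        have hsint : ⋂₀ (s : Set (Set Y)) = ∅ := by
          rw [hs, Finset.coe_image, Set.sInter_image]
          rw [Set.eq_empty_iff_forall_notMem] at ht ⊢
          intro y hy
          exact ht y (Set.mem_iInter₂.2 fun i hi => Set.mem_iInter₂.1 hy i hi)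
        have := h5 s hsC hsne hsint
        rw [Set.eq_empty_iff_forall_notMem] at this
        refine this x (Set.mem_sInter.2 ?_)
        rintro A ⟨F, hF, rfl⟩
        simp only [hs, Finset.coe_image, Set.mem_image] at hF
        obtain ⟨i, _, rfl⟩ := hF
        exact i.2.2
    -- uniqueness
    have huniq : ∀ x : X, ∀ y₁ y₂ : Y, P x y₁ → P x y₂ → y₁ = y₂ := by
      intro x y₁ y₂ hy₁ hy₂
      by_contra hne
      obtain ⟨U₁, U₂, hU₁, hU₂, hyU₁, hyU₂, hdisj⟩ := t2_separation hne
      obtain ⟨F, hFC, hF1, hF2⟩ := latticeBase_squeeze hC hU₁.isClosed_compl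
        isClosed_singleton.isOpen_compl
        (fun z hz => by simpa using fun h : z = y₁ => hz (h ▸ hyU₁))
      obtain ⟨G, hGC, hG1, hG2⟩ := latticeBase_squeeze hC hU₂.isClosed_compl
        isClosed_singleton.isOpen_compl
        (fun z hz => by simpa using fun h : z = y₂ => hz (h ▸ hyU₂))
      have hFG : F ∪ G = Set.univ := by
        rw [Set.eq_univ_iff_forall]
        intro z
        rw [Set.mem_union]
        by_contra hz
        push_neg at hz
        have hz1 : z ∈ U₁ := by by_contra h; exact hz.1 (hF1 h)
        have hz2 : z ∈ U₂ := by by_contra h; exact hz.2 (hG1 h)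
        exact Set.disjoint_left.1 hdisj hz1 hz2
      have := h4 F hFC G hGC hFG
      have hx : x ∈ φ F ∪ φ G := this ▸ Set.mem_univ x
      rcases hx with hx | hx
      · exact hF2 (hy₁ F hFC hx) rfl
      · exact hG2 (hy₂ G hGC hx) rfl
    choose f hf using hex
    have key : ∀ x : X, ∀ F ∈ C, x ∈ φ F → f x ∈ F := fun x => hf x
    -- continuity
    have hcont : Continuous f := by
      rw [continuous_def]
      intro V hV
      rw [isOpen_iff_forall_mem_open]
      intro x hx
      have hfx : f x ∈ V := hx
      obtain ⟨t, htnhds, htclosed, htV⟩ :=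
        exists_mem_nhds_isClosed_subset (hV.mem_nhds hfx)
      obtain ⟨G, hGC, htG, hGV⟩ := latticeBase_squeeze hC htclosed hV htV
      have hfxint : f x ∈ interior t := mem_interior_iff_mem_nhds.2 htnhds
      obtain ⟨F, hFC, hF1, hF2⟩ := latticeBase_squeeze hC
        isOpen_interior.isClosed_compl isClosed_singleton.isOpen_compl
        (fun z hz => by simpa using fun h : z = f x => hz (h ▸ hfxint))
      have hFG : F ∪ G = Set.univ := by
        rw [Set.eq_univ_iff_forall]
        intro z
        rw [Set.mem_union]
        by_contra hz
        push_neg at hz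
        have : z ∈ interior t := by by_contra h; exact hz.1 (hF1 h)
        exact hz.2 (htG (interior_subset this))
      have hxF : x ∉ φ F := fun h => hF2 (key x F hFC h) rfl
      refine ⟨(φ F)ᶜ, ?_, (h1 F hFC).isOpen_compl, hxF⟩
      intro x' hx'
      have := h4 F hFC G hGC hFG
      have hx'union : x' ∈ φ F ∪ φ G := this ▸ Set.mem_univ x'
      rcases hx'union with h | h
      · exact absurd h hx'
      · exact hGV (key x' G hGC h)
    -- surjectivity
    have hsurj : Function.Surjective f := by
      intro y
      by_contra hcon
      push_neg at hcon
      have hrange : IsClosed (Set.range f) := (isCompact_range hcont).isClosed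
      have hry : Set.range f ⊆ {y}ᶜ := by
        rintro z ⟨x, rfl⟩
        simpa using hcon x
      obtain ⟨G, hGC, hG1, hG2⟩ := latticeBase_squeeze hC hrange
        isClosed_singleton.isOpen_compl hry
      have hyG : y ∉ G := fun h => hG2 h rfl
      obtain ⟨F, hFC, hF1, hF2⟩ := latticeBase_squeeze hC isClosed_singleton
        (hC.1 G hGC).isOpen_compl (by simpa using hyG)
      have hFne : F ≠ ∅ := by
        rw [← Set.nonempty_iff_ne_empty]
        exact ⟨y, hF1 rfl⟩
      have := h3 F hFC hFne
      rw [← Set.nonempty_iff_ne_empty] at this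
      obtain ⟨x, hxF⟩ := this
      have h₁ : f x ∈ F := key x F hFC hxF
      have h₂ : f x ∈ G := hG1 ⟨x, rfl⟩
      exact hF2 h₁ h₂
    exact ⟨f, hcont, hsurj⟩
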